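/- arXiv:1212.6789 — 2 statements merged into one kernel-verified Lean document; each statement's English description precedes it below -/
import Mathlib

section
/- Let λ be an n-partition and let T be a semistandard tableau of shape λ. Then for every box (j,i) of λ one has T(j,i) ≤ S(T;j,i); that is, T is dominated entrywise by its scanning tableau S(T). -/
/-
Common combinatorial set-up for "Tableaux for Key Polynomials, Demazure
Characters, and Atoms" (Proctor–Willis).

Conventions: a box `(j, i)` means column `j`, row `i`, both 1-indexed.
Partial (remnant) tableaux are encoded by their column-length functions
`c : ℕ → ℕ` (each column of a remnant is a top segment of the original
column), together with the ambient value function `T : ℕ → ℕ → ℕ`.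
-/

open scoped BigOperators Classical

noncomputable section

namespace KeyPoly

open MvPolynomial

/-- An `n`-partition `λ = (λ_1, …, λ_n)` with `λ_1 ≥ … ≥ λ_n ≥ 0`,
recorded as a function on `1, …, n`, vanishing beyond `n`. -/
structure NPartition (n : ℕ) where
  part : ℕ → ℕ
  antitone : ∀ ⦃i j : ℕ⦄, 1 ≤ i → i ≤ j → part j ≤ part i
  outside : ∀ i : ℕ, n < i → part i = 0

variable {n : ℕ}

/-- The column length `ζ_j` of the Young diagram of `λ`. -/
def zeta (lam : NPartition n) (j : ℕ) : ℕ :=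
  ((Finset.Icc 1 n).filter fun i => j ≤ lam.part i).card

/-- The box `(j,i)` (column `j`, row `i`) belongs to the diagram of `λ`. -/
def InShape (lam : NPartition n) (j i : ℕ) : Prop :=
  1 ≤ j ∧ 1 ≤ i ∧ i ≤ n ∧ j ≤ lam.part i

/-- The boxes of the diagram of `λ`, as a finite set of pairs (column, row). -/
def boxes (lam : NPartition n) : Finset (ℕ × ℕ) :=
  (Finset.Icc 1 (lam.part 1) ×ˢ Finset.Icc 1 n).filter fun b => b.1 ≤ lam.part b.2

/-- `T` is a semistandard tableau of shape `λ` with values in `[1,n]`: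
rows weakly increase eastward, columns strictly increase southward. -/
def IsSSYT (lam : NPartition n) (T : ℕ → ℕ → ℕ) : Prop :=
  (∀ j i, InShape lam j i → 1 ≤ T j i ∧ T j i ≤ n) ∧
  (∀ j i, InShape lam (j + 1) i → T j i ≤ T (j + 1) i) ∧
  (∀ j i, InShape lam j (i + 1) → T j i < T j (i + 1))

/-- Normalization: the filling vanishes outside the shape. -/
def ZeroOutside (lam : NPartition n) (T : ℕ → ℕ → ℕ) : Prop :=
  ∀ j i, ¬ InShape lam j i → T j i = 0

/-- `T(l, k+1)`, with the boundary convention `n+1` when `k = ζ_l`. -/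
def south (lam : NPartition n) (T : ℕ → ℕ → ℕ) (l k : ℕ) : ℕ :=
  if InShape lam l (k + 1) then T l (k + 1) else n + 1

/-- `T(l+1, k)`, with the boundary convention `n` when `l = λ_k`. -/
def east (lam : NPartition n) (T : ℕ → ℕ → ℕ) (l k : ℕ) : ℕ :=
  if InShape lam (l + 1) k then T (l + 1) k else n

/-- An `n`-permutation: a tuple `(p 1, …, p n)` of distinct entries from `[1,n]`. -/
def IsNPerm (n : ℕ) (p : ℕ → ℕ) : Prop :=
  Set.BijOn p (Set.Icc 1 n) (Set.Icc 1 n)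

/-- The `λ`-key `Y_λ(π)`: column `j` is `π_1, …, π_{ζ_j}` sorted increasingly
(from top to bottom); zero outside the shape. -/
def keyTab (lam : NPartition n) (p : ℕ → ℕ) (j i : ℕ) : ℕ :=
  if InShape lam j i then
    (((Finset.Icc 1 (zeta lam j)).image p).sort (· ≤ ·)).getD (i - 1) 0
  else 0

/-- A semistandard `T` is a key if the values of each column contain the
values of every column to its east. -/
def colSet (lam : NPartition n) (T : ℕ → ℕ → ℕ) (j : ℕ) : Finset ℕ :=
  (Finset.Icc 1 (zeta lam j)).image (T j)

def IsKey (lam : NPartition n) (T : ℕ → ℕ → ℕ) : Prop :=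
  ∀ j j' : ℕ, 1 ≤ j → j ≤ j' → j' ≤ lam.part 1 → colSet lam T j' ⊆ colSet lam T j

/-! ### The (right) scanning method -/

/-- The next column of the scanning path: the earliest column `h' > h`
(up to `maxCol`) whose column bottom in the remnant `c` is nonempty and has
value weakly larger than the bottom value of column `h`. -/
def nextCol (T : ℕ → ℕ → ℕ) (c : ℕ → ℕ) (maxCol h : ℕ) : Option ℕ :=
  (List.range' (h + 1) (maxCol - h)).find?
    (fun h' => decide (0 < c h' ∧ T h (c h) ≤ T h' (c h')))

/-- Columns of the scanning path (EWIS of column bottoms) starting at column `h`,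
with explicit fuel. -/
def pathColsAux (T : ℕ → ℕ → ℕ) (c : ℕ → ℕ) (maxCol : ℕ) : ℕ → ℕ → List ℕ
  | 0, h => [h]
  | fuel + 1, h =>
    match nextCol T c maxCol h with
    | none => [h]
    | some h' => h :: pathColsAux T c maxCol fuel h'

/-- Columns of the scanning path starting at the bottom of column `j` of the
remnant with column lengths `c`. -/
def pathCols (T : ℕ → ℕ → ℕ) (c : ℕ → ℕ) (maxCol j : ℕ) : List ℕ :=
  pathColsAux T c maxCol maxCol j

/-- Remove the scanning path starting in column `j` from the remnant `c`. -/
def removePath (T : ℕ → ℕ → ℕ) (c : ℕ → ℕ) (maxCol j : ℕ) : ℕ → ℕ :=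
  fun h => if h ∈ pathCols T c maxCol j then c h - 1 else c h

/-- Iterate path removal `r` times, always starting from column `j`. -/
def remnantIter (T : ℕ → ℕ → ℕ) (c0 : ℕ → ℕ) (maxCol j : ℕ) : ℕ → ℕ → ℕ
  | 0 => c0
  | r + 1 => removePath T (remnantIter T c0 maxCol j r) maxCol j

/-- Column lengths of the remnant tableau `T^{(j;i)}`. -/
def remnant (lam : NPartition n) (T : ℕ → ℕ → ℕ) (j i : ℕ) : ℕ → ℕ :=
  remnantIter T (zeta lam) (lam.part 1) j (zeta lam j - i)

/-- The scanning path `P(T; j, i)`, recorded by its list of columns. -/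
def scanPath (lam : NPartition n) (T : ℕ → ℕ → ℕ) (j i : ℕ) : List ℕ :=
  pathCols T (remnant lam T j i) (lam.part 1) j

/-- The scanning value `S(T; j, i)`: the last value of the EWIS from `(j,i)`. -/
def scanValue (lam : NPartition n) (T : ℕ → ℕ → ℕ) (j i : ℕ) : ℕ :=
  T ((scanPath lam T j i).getLastD j)
    (remnant lam T j i ((scanPath lam T j i).getLastD j))

/-- The box `(l,k)` lies on the scanning path `P(T; j, i)`. -/
def InScanPath (lam : NPartition n) (T : ℕ → ℕ → ℕ) (j i l k : ℕ) : Prop :=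
  l ∈ scanPath lam T j i ∧ k = remnant lam T j i l

/-- `m(U)` where `U` is the remnant with column lengths `c` restricted to the
columns `l+1, …, maxCol`:  the maximum of the column-bottom values, with the
convention `m((())) = 1` for the empty tableau. -/
def mEast (T : ℕ → ℕ → ℕ) (c : ℕ → ℕ) (maxCol l : ℕ) : ℕ :=
  max 1 (((Finset.Icc (l + 1) maxCol).filter fun h => 0 < c h).sup fun h => T h (c h))

/-! ### The condition sets A, C, and B -/

/-- The set `A_λ(T, π; l, k)`. -/
def Aset (lam : NPartition n) (T : ℕ → ℕ → ℕ) (p : ℕ → ℕ) (l k : ℕ) : Set ℕ :=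
  if keyTab lam p l k < mEast T (remnant lam T l k) (lam.part 1) l then (∅ : Set ℕ)
  else Set.Icc k (min (keyTab lam p l k) (min (south lam T l k - 1) (east lam T l k)))

/-- The set `C_λ(T, π; l, k)`. -/
def Cset (lam : NPartition n) (T : ℕ → ℕ → ℕ) (p : ℕ → ℕ) (l k : ℕ) : Set ℕ :=
  if l = lam.part 1 then {keyTab lam p l k}
  else if keyTab lam p l k < mEast T (remnant lam T l k) (lam.part 1) l then (∅ : Set ℕ)
  else if mEast T (remnant lam T l k) (lam.part 1) l = keyTab lam p l k then
    Set.Icc k (min (keyTab lam p l k) (min (south lam T l k - 1) (east lam T l k)))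
  else {keyTab lam p l k} ∩ Set.Icc k (min (south lam T l k - 1) (east lam T l k))

/-- The row index `a(l,k;j)`:  the `i` with `(l-1,k) ∈ P(T;j,i)`
(convention `a(l,k;l) = k`). -/
def aIdx (lam : NPartition n) (T : ℕ → ℕ → ℕ) (l k j : ℕ) : ℕ :=
  if j = l then k
  else ((Finset.Icc 1 (zeta lam j)).filter fun i => InScanPath lam T j i (l - 1) k).sup id

/-- The row index `b(l,k;j)`:  the `i` with `(l,k+1) ∈ P(T;j,i)` when `k < ζ_l`,
and `ζ_j + 1` when `k = ζ_l` (convention `b(l,k;l) = k+1`). -/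
def bIdx (lam : NPartition n) (T : ℕ → ℕ → ℕ) (l k j : ℕ) : ℕ :=
  if j = l then k + 1
  else if k = zeta lam l then zeta lam j + 1
  else ((Finset.Icc 1 (zeta lam j)).filter fun i => InScanPath lam T j i l (k + 1)).sup id

/-- `E(l,k;j,i)`:  the value of `T` at the box `(h,m)` of `P(T;j,i)` with `h < l`
maximal (convention `E(l,k;l,k) = k`). -/
def Epath (lam : NPartition n) (T : ℕ → ℕ → ℕ) (l k j i : ℕ) : ℕ :=
  if j = l then k
  else
    T (((scanPath lam T j i).filter fun h => decide (h < l)).foldr max 0)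
      (remnant lam T j i (((scanPath lam T j i).filter fun h => decide (h < l)).foldr max 0))

/-- The set `B_λ(T, π; l, k) = ⋂_{j=1}^{l} ⋃_{i=a(j)}^{b(j)-1} [E(l,k;j,i), Y_λ(π)(j,i)]`. -/
def Bset (lam : NPartition n) (T : ℕ → ℕ → ℕ) (p : ℕ → ℕ) (l k : ℕ) : Set ℕ :=
  {v | ∀ j, 1 ≤ j → j ≤ l →
    ∃ i, aIdx lam T l k j ≤ i ∧ i + 1 ≤ bIdx lam T l k j ∧
      Epath lam T l k j i ≤ v ∧ v ≤ keyTab lam p j i}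

/-! ### The left scanning method -/

/-- The largest row `r ≤ c j` of column `j` whose value is at most `x`. -/
def maxRow (T : ℕ → ℕ → ℕ) (c : ℕ → ℕ) (j x : ℕ) : ℕ :=
  ((Finset.Icc 1 (c j)).filter fun r => T j r ≤ x).sup id

/-- The rows of the maximizing weakly decreasing sequence through columns
`j, j-1, …, 1` with initial bound `x`, in a remnant with column lengths `c`. -/
def leftRows (T : ℕ → ℕ → ℕ) (c : ℕ → ℕ) : ℕ → ℕ → List ℕ
  | 0, _ => []
  | j + 1, x => maxRow T c (j + 1) x :: leftRows T c j (T (j + 1) (maxRow T c (j + 1) x))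

/-- The column-1 value at the end of the left scanning path originating at `(j, r)`. -/
def leftEndVal (T : ℕ → ℕ → ℕ) (c : ℕ → ℕ) (j r : ℕ) : ℕ :=
  T 1 ((leftRows T c j (T j r)).getLastD 0)

/-- Remove the left scanning path originating at `(l, c l)`, together with
all values beneath it, from the remnant `c`. -/
def leftRemovePath (T : ℕ → ℕ → ℕ) (c : ℕ → ℕ) (l : ℕ) : ℕ → ℕ :=
  fun j =>
    if 1 ≤ j ∧ j ≤ l then (leftRows T c l (T l (c l))).getD (l - j) 0 - 1 else c j

/-- Iterate left-path removal `r` times (always for column `l`). -/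
def leftRemnantIter (T : ℕ → ℕ → ℕ) (c0 : ℕ → ℕ) (l : ℕ) : ℕ → ℕ → ℕ
  | 0 => c0
  | r + 1 => leftRemovePath T (leftRemnantIter T c0 l r) l

/-- Column lengths of the left remnant used to compute `M(T; l, i)`:
`T` restricted to its first `l` columns with the left scanning paths
originating at `(l, ζ_l), …, (l, i+1)` (and everything beneath them) removed. -/
def leftRemnant (lam : NPartition n) (T : ℕ → ℕ → ℕ) (l i : ℕ) : ℕ → ℕ :=
  leftRemnantIter T (zeta lam) l (zeta lam l - i)

/-- The left scanning value `M(T; l, i)`. -/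
def leftScanValue (lam : NPartition n) (T : ℕ → ℕ → ℕ) (l i : ℕ) : ℕ :=
  leftEndVal T (leftRemnant lam T l i) l i

/-! ### The condition sets F and G -/

/-- The set `F_λ(T, σ; l, k)`. -/
def Fset (lam : NPartition n) (T : ℕ → ℕ → ℕ) (sg : ℕ → ℕ) (l k : ℕ) : Set ℕ :=
  if l = 1 then Set.Icc (keyTab lam sg 1 k) (south lam T 1 k - 1)
  else
    let U := leftRemnant lam T l k
    let q := maxRow T U (l - 1) (south lam T l k - 1)
    let P := (Finset.Icc 1 q).filter fun h => keyTab lam sg l k ≤ leftEndVal T U (l - 1) h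
    if hP : P.Nonempty then Set.Icc (T (l - 1) (P.min' hP)) (south lam T l k - 1)
    else (∅ : Set ℕ)

/-- The set `G_λ(T, σ; l, k)`. -/
def Gset (lam : NPartition n) (T : ℕ → ℕ → ℕ) (sg : ℕ → ℕ) (l k : ℕ) : Set ℕ :=
  if l = 1 then {keyTab lam sg 1 k}
  else
    let U := leftRemnant lam T l k
    let q := maxRow T U (l - 1) (south lam T l k - 1)
    let P := (Finset.Icc 1 q).filter fun h => leftEndVal T U (l - 1) h = keyTab lam sg l k
    if hP : P.Nonempty then
      Set.Icc (T (l - 1) (P.min' hP))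
        (min ((if P.max' hP + 1 ≤ U (l - 1) then T (l - 1) (P.max' hP + 1) else n + 1) - 1)
          (south lam T l k - 1))
    else (∅ : Set ℕ)

/-! ### Polynomials, divided differences, words -/

/-- Polynomials in the variables `X 1, …, X n` (indexed by `ℕ`) over `ℚ`. -/
abbrev Poly : Type := MvPolynomial ℕ ℚ

/-- The action of `s_i` on polynomials: interchange `x_i` and `x_{i+1}`. -/
def sOp (i : ℕ) (P : Poly) : Poly := rename (Equiv.swap i (i + 1)) P

/-- The divided difference operator
`ρ_i = (x_i - x_{i+1})⁻¹ ∘ (1 - s_i) ∘ x_i`, defined as the unique polynomial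
`Q` with `(x_i - x_{i+1}) Q = x_i P - s_i (x_i P)`. -/
def rhoOp (i : ℕ) (P : Poly) : Poly :=
  if h : ∃ Q : Poly, (X i - X (i + 1)) * Q = X i * P - sOp i (X i * P) then h.choose
  else 0

/-- The operator `ρ̄_i := ρ_i - 1`. -/
def rhoBarOp (i : ℕ) (P : Poly) : Poly := rhoOp i P - P

/-- Apply operators indexed by a word `[i_t, …, i_1]`, rightmost first:
`applyOps f [i_t, …, i_1] P = f i_t (⋯ (f i_1 P))`. -/
def applyOps (f : ℕ → Poly → Poly) : List ℕ → Poly → Poly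
  | [], P => P
  | i :: w, P => f i (applyOps f w P)

/-- The monomial `x_1^{λ_1} ⋯ x_n^{λ_n}`. -/
def lamMonomial (lam : NPartition n) : Poly :=
  ∏ i ∈ Finset.Icc 1 n, X i ^ lam.part i

/-- The weight monomial `x^T = ∏ x_i^{c_i}` of the filling `T`. -/
def weight (lam : NPartition n) (T : ℕ → ℕ → ℕ) : Poly :=
  ∏ b ∈ boxes lam, X (T b.1 b.2)

/-- The simple reflection `s_i` acting by value. -/
def swapVal (i v : ℕ) : ℕ := if v = i then i + 1 else if v = i + 1 then i else v

/-- The permutation `s_{i_t} ⋯ s_{i_1}.(1, 2, …, n)` obtained by applying the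
word `w = [i_t, …, i_1]` (rightmost letter first, each acting by value) to the
identity. -/
def permOfWord (w : List ℕ) : ℕ → ℕ := w.foldr (fun i f => swapVal i ∘ f) id

/-- `w` is a word in letters `s_1, …, s_{n-1}` producing `π` from `(1, …, n)`. -/
def WordFor (n : ℕ) (w : List ℕ) (p : ℕ → ℕ) : Prop :=
  (∀ i ∈ w, 1 ≤ i ∧ i + 1 ≤ n) ∧ ∀ t, 1 ≤ t → t ≤ n → permOfWord w t = p t

/-- `w` is a reduced word for `π`: it produces `π` with minimal length. -/
def IsReducedWord (n : ℕ) (w : List ℕ) (p : ℕ → ℕ) : Prop :=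
  WordFor n w p ∧ ∀ w' : List ℕ, WordFor n w' p → w.length ≤ w'.length

/-- The atom `c_λ(π;x) = ρ̄_{i_t} ⋯ ρ̄_{i_1} . x_1^{λ_1} ⋯ x_n^{λ_n}`, computed
from a choice of reduced word for `π` (it is independent of this choice). -/
def atomPoly (lam : NPartition n) (p : ℕ → ℕ) : Poly :=
  if h : ∃ w : List ℕ, IsReducedWord n w p then
    applyOps rhoBarOp h.choose (lamMonomial lam)
  else 0

/-! ### `S_n^λ` -/

/-- The set `Q_λ` of distinct column lengths of `λ`. -/
def Qset (lam : NPartition n) : Finset ℕ := (Finset.Icc 1 (lam.part 1)).image (zeta lam)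

/-- `π ∈ S_n^λ`: an `n`-permutation increasing on each block `[q_{r-1}+1, q_r]`
cut out by the column lengths of `λ` (equivalently, `π_i < π_j` whenever
`i < j` and no element of `Q_λ` lies in `[i, j)`). -/
def InSnLam (lam : NPartition n) (p : ℕ → ℕ) : Prop :=
  IsNPerm n p ∧ ∀ i j, 1 ≤ i → i < j → j ≤ n →
    (∀ q ∈ Qset lam, q < i ∨ j ≤ q) → p i < p j

end KeyPoly

namespace KeyPoly

variable {n : ℕ}

lemma pathColsAux_ne_nil (T : ℕ → ℕ → ℕ) (c : ℕ → ℕ) (maxCol fuel h : ℕ) :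
    pathColsAux T c maxCol fuel h ≠ [] := by
  cases fuel with
  | zero => simp [pathColsAux]
  | succ f =>
    unfold pathColsAux
    cases nextCol T c maxCol h <;> simp

lemma mem_pathColsAux_self (T : ℕ → ℕ → ℕ) (c : ℕ → ℕ) (maxCol fuel h : ℕ) :
    h ∈ pathColsAux T c maxCol fuel h := by
  cases fuel with
  | zero => simp [pathColsAux]
  | succ f =>
    unfold pathColsAux
    cases nextCol T c maxCol h <;> simp

lemma pathColsAux_val_le (T : ℕ → ℕ → ℕ) (c : ℕ → ℕ) (maxCol : ℕ) :
    ∀ fuel h, T h (c h) ≤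
      T ((pathColsAux T c maxCol fuel h).getLastD h)
        (c ((pathColsAux T c maxCol fuel h).getLastD h)) := by
  intro fuel
  induction fuel with
  | zero => intro h; simp [pathColsAux]
  | succ f ih =>
    intro h
    unfold pathColsAux
    cases hnc : nextCol T c maxCol h with
    | none => simp
    | some h' =>
      have hp := List.find?_some hnc
      simp only [decide_eq_true_eq] at hp
      have h2 := ih h'
      have hne := pathColsAux_ne_nil T c maxCol f h'
      have hlast : (h :: pathColsAux T c maxCol f h').getLastD h
          = (pathColsAux T c maxCol f h').getLastD h' := by
        rw [List.getLastD_cons]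
        obtain ⟨a, l, hl⟩ := List.exists_cons_of_ne_nil hne
        rw [hl]
        clear hl hne h2 hp hnc
        induction l generalizing a with
        | nil => simp
        | cons b t _ => simp only [List.getLastD_cons]
      rw [hlast]
      exact le_trans hp.2 h2

lemma remnantIter_self (T : ℕ → ℕ → ℕ) (c0 : ℕ → ℕ) (maxCol j : ℕ) :
    ∀ r, remnantIter T c0 maxCol j r j = c0 j - r := by
  intro r
  induction r with
  | zero => simp [remnantIter]
  | succ r ih =>
    have hmem : j ∈ pathCols T (remnantIter T c0 maxCol j r) maxCol j :=
      mem_pathColsAux_self _ _ _ _ _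
    simp only [remnantIter, removePath, if_pos hmem, ih]
    omega

/-- Corollary 3.4.  `T ≤ S(T)` entrywise. -/
theorem le_scanValue (n : ℕ) (hn : 1 ≤ n) (lam : NPartition n)
    (T : ℕ → ℕ → ℕ) (hT : IsSSYT lam T) (j i : ℕ) (hbox : InShape lam j i) :
    T j i ≤ scanValue lam T j i := by
  obtain ⟨hj1, hi1, hin, hji⟩ := hbox
  have hzeta : i ≤ zeta lam j := by
    have hsub : Finset.Icc 1 i ⊆ (Finset.Icc 1 n).filter fun i' => j ≤ lam.part i' := by
      intro x hx
      simp only [Finset.mem_Icc, Finset.mem_filter] at *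
      exact ⟨⟨hx.1, hx.2.trans hin⟩, le_trans hji (lam.antitone hx.1 hx.2)⟩
    calc i = (Finset.Icc 1 i).card := by simp
      _ ≤ _ := Finset.card_le_card hsub
  have hrem : remnant lam T j i j = i := by
    unfold remnant
    rw [remnantIter_self]
    omega
  have hkey := pathColsAux_val_le T (remnant lam T j i) (lam.part 1) (lam.part 1) j
  rw [hrem] at hkey
  exact hkey

end KeyPoly
end
end

section
/- Let λ be an n-partition, σ an n-permutation, and T a semistandard tableau of shape λ. Then M(T) ≥ Y_λ(σ) (entrywise) if and only if T(l,k) ∈ F_λ(T,σ;l,k) for every box (l,k) of λ. -/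
/-
Common combinatorial set-up for "Tableaux for Key Polynomials, Demazure
Characters, and Atoms" (Proctor–Willis).

Conventions: a box `(j, i)` means column `j`, row `i`, both 1-indexed.
Partial (remnant) tableaux are encoded by their column-length functions
`c : ℕ → ℕ` (each column of a remnant is a top segment of the original
column), together with the ambient value function `T : ℕ → ℕ → ℕ`.
-/

open scoped BigOperators Classical

noncomputable section

/-
Everything happens in one step west. Let `U` be the remnant used for `M(T;l,k)`, so that
`(l,k)` is the bottom box of its column `l`. The left scanning path from `(l,k)` enters
column `l-1` at the lowest row `h₀` of `U` holding a value `≤ T(l,k)`, hence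
`M(T;l,k) = g_{h₀}`; and `h₀ ≤ q` because `T(l,k) < T(l,k+1)`. The end values `g_h` are weakly
increasing in `h`, since each step of a maximizing weakly decreasing sequence is monotone in
its starting value and the remnant columns stay weakly shorter to the east. So
`Y(l,k) ≤ g_{h₀}` holds iff some `h ≤ h₀` has `g_h ≥ Y(l,k)`, i.e. iff the first such row `p`
has `T(l-1,p) ≤ T(l,k)`.
-/

namespace KeyPoly

section

variable {n : ℕ} {lam : NPartition n} {T : ℕ → ℕ → ℕ} {c : ℕ → ℕ} {i j k l r x : ℕ}

theorem zeta_le (lam : NPartition n) (j : ℕ) : zeta lam j ≤ n :=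
  (Finset.card_filter_le _ _).trans (by simp)

theorem zeta_antitone (lam : NPartition n) : Antitone (zeta lam) := fun _ _ h =>
  Finset.card_le_card fun _ hi => by
    simp only [Finset.mem_filter] at hi ⊢
    exact ⟨hi.1, h.trans hi.2⟩

theorem le_zeta_iff (hi : 1 ≤ i) (hin : i ≤ n) : i ≤ zeta lam j ↔ j ≤ lam.part i := by
  constructor
  · intro h
    by_contra! hlt
    have hsub : (Finset.Icc 1 n).filter (fun t => j ≤ lam.part t) ⊆ Finset.Icc 1 (i - 1) := by
      intro t ht
      simp only [Finset.mem_filter, Finset.mem_Icc] at ht ⊢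
      by_contra! hti
      have := lam.antitone hi (show i ≤ t by omega)
      omega
    have := Finset.card_le_card hsub
    simp only [Nat.card_Icc] at this
    unfold zeta at h
    omega
  · intro h
    have hsub : Finset.Icc 1 i ⊆ (Finset.Icc 1 n).filter (fun t => j ≤ lam.part t) := by
      intro t ht
      simp only [Finset.mem_Icc, Finset.mem_filter] at ht ⊢
      exact ⟨⟨ht.1, ht.2.trans hin⟩, h.trans (lam.antitone ht.1 ht.2)⟩
    simpa [zeta] using Finset.card_le_card hsub

theorem inShape_of_le_zeta (hj : 1 ≤ j) (hi : 1 ≤ i) (hiz : i ≤ zeta lam j) :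
    InShape lam j i :=
  have hin := hiz.trans (zeta_le lam j)
  ⟨hj, hi, hin, (le_zeta_iff hi hin).1 hiz⟩

theorem InShape.le_zeta (h : InShape lam j i) : i ≤ zeta lam j :=
  (le_zeta_iff h.2.1 h.2.2.1).2 h.2.2.2

theorem IsSSYT.strictMonoOn_col (hT : IsSSYT lam T) (hj : 1 ≤ j) :
    StrictMonoOn (T j) (Set.Icc 1 (zeta lam j)) :=
  strictMonoOn_of_lt_succ Set.ordConnected_Icc fun i _ hi hi' => by
    rw [Order.succ_eq_add_one] at hi' ⊢
    exact hT.2.2 j i (inShape_of_le_zeta hj (by omega) hi'.2)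

theorem IsSSYT.lt_south (hT : IsSSYT lam T) (h : InShape lam l k) : T l k < south lam T l k := by
  unfold south
  split_ifs with hs
  · exact hT.2.2 l k hs
  · exact Nat.lt_succ_of_le (hT.1 l k h).2

theorem maxRow_le (T : ℕ → ℕ → ℕ) (c : ℕ → ℕ) (j x : ℕ) : maxRow T c j x ≤ c j :=
  Finset.sup_le fun _ hr => (Finset.mem_Icc.1 (Finset.mem_filter.1 hr).1).2

theorem le_maxRow (h1 : 1 ≤ r) (h2 : r ≤ c j) (h3 : T j r ≤ x) : r ≤ maxRow T c j x :=
  Finset.le_sup (f := id) (Finset.mem_filter.2 ⟨Finset.mem_Icc.2 ⟨h1, h2⟩, h3⟩)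

theorem maxRow_mono : Monotone (maxRow T c j) := fun _ _ h =>
  Finset.sup_mono fun _ hr => by
    simp only [Finset.mem_filter] at hr ⊢
    exact ⟨hr.1, hr.2.trans h⟩

theorem apply_maxRow_le (h : 1 ≤ maxRow T c j x) : T j (maxRow T c j x) ≤ x := by
  have hne : ((Finset.Icc 1 (c j)).filter fun r => T j r ≤ x).Nonempty := by
    by_contra hempty
    simp [maxRow, Finset.not_nonempty_iff_eq_empty.1 hempty] at h
  obtain ⟨r, hr, hr_eq⟩ := Finset.exists_mem_eq_sup _ hne id
  rw [maxRow, hr_eq]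
  exact (Finset.mem_filter.1 hr).2

theorem maxRow_apply_self (hT : IsSSYT lam T) (hj : 1 ≤ j) (hc : c j ≤ zeta lam j)
    (h1 : 1 ≤ r) (h2 : r ≤ c j) : maxRow T c j (T j r) = r := by
  refine le_antisymm (Finset.sup_le fun b hb => ?_) (le_maxRow h1 h2 le_rfl)
  simp only [Finset.mem_filter, Finset.mem_Icc] at hb
  exact ((hT.strictMonoOn_col hj).le_iff_le ⟨hb.1.1, hb.1.2.trans hc⟩
    ⟨h1, h2.trans hc⟩).1 hb.2

theorem maxRow_apply_maxRow (h : 1 ≤ maxRow T c j x) :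
    maxRow T c j (T j (maxRow T c j x)) = maxRow T c j x :=
  le_antisymm (maxRow_mono (apply_maxRow_le h)) (le_maxRow h (maxRow_le T c j x) le_rfl)

theorem leftRows_apply_maxRow (h : 1 ≤ maxRow T c j x) :
    leftRows T c j (T j (maxRow T c j x)) = leftRows T c j x := by
  cases j with
  | zero => rfl
  | succ j => simp only [leftRows, maxRow_apply_maxRow h]

/-- The row in column `j` of the path `leftRows T c l x`, which lists columns `l, l-1, …, 1`. -/
def leftRow (T : ℕ → ℕ → ℕ) (c : ℕ → ℕ) (l x j : ℕ) : ℕ :=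
  (leftRows T c l x).getD (l - j) 0

theorem leftRow_self (hl : 1 ≤ l) : leftRow T c l x l = maxRow T c l x := by
  obtain ⟨l, rfl⟩ := Nat.exists_eq_add_of_le' hl
  simp [leftRow, leftRows]

theorem leftRow_succ (hjl : j ≤ l) :
    leftRow T c (l + 1) x j = leftRow T c l (T (l + 1) (maxRow T c (l + 1) x)) j := by
  rw [leftRow, leftRows, Nat.succ_sub hjl, List.getD_cons_succ, leftRow]

theorem leftRow_pred (hj : 1 ≤ j) (hjl : j < l) :
    leftRow T c l x j = maxRow T c j (T (j + 1) (leftRow T c l x (j + 1))) := by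
  induction l generalizing x with
  | zero => omega
  | succ l ih =>
    rw [leftRow_succ (by omega)]
    rcases (Nat.lt_succ_iff.1 hjl).eq_or_lt with rfl | hlt
    · rw [leftRow_self hj, leftRow_self (by omega)]
    · rw [ih hlt, leftRow_succ hlt]

theorem leftRow_le (hj : 1 ≤ j) (hjl : j ≤ l) : leftRow T c l x j ≤ c j := by
  rcases hjl.eq_or_lt with rfl | hlt
  · exact leftRow_self hj ▸ maxRow_le T c j x
  · exact leftRow_pred hj hlt ▸ maxRow_le T c j _

structure IsLeftRemnant (lam : NPartition n) (l : ℕ) (c : ℕ → ℕ) : Prop where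
  le_zeta : ∀ j, c j ≤ zeta lam j
  antitoneOn : AntitoneOn c (Set.Icc 1 l)

namespace IsLeftRemnant

theorem Icc_subset (hc : IsLeftRemnant lam l c) (j : ℕ) :
    Set.Icc 1 (c j) ⊆ Set.Icc 1 (zeta lam j) :=
  Set.Icc_subset_Icc_right (hc.le_zeta j)

theorem le_maxRow_succ (hT : IsSSYT lam T) (hc : IsLeftRemnant lam l c)
    (hj : 1 ≤ j) (hjl : j + 1 ≤ l) (h1 : 1 ≤ r) (h2 : r ≤ c (j + 1)) :
    r ≤ maxRow T c j (T (j + 1) r) :=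
  le_maxRow h1 (h2.trans (hc.antitoneOn ⟨hj, by omega⟩ ⟨by omega, hjl⟩ (by omega)))
    (hT.2.1 j r (inShape_of_le_zeta (by omega) h1 (h2.trans (hc.le_zeta _))))

theorem leftRow_succ_le (hT : IsSSYT lam T) (hc : IsLeftRemnant lam l c)
    (hj : 1 ≤ j) (hjl : j < l) (h : 1 ≤ leftRow T c l x (j + 1)) :
    leftRow T c l x (j + 1) ≤ leftRow T c l x j := by
  rw [leftRow_pred hj hjl]
  exact hc.le_maxRow_succ hT hj hjl h (leftRow_le (by omega) hjl)

theorem one_le_leftRow (hT : IsSSYT lam T) (hc : IsLeftRemnant lam l c)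
    (h : 1 ≤ maxRow T c l x) (hj : 1 ≤ j) (hjl : j ≤ l) : 1 ≤ leftRow T c l x j := by
  induction hjl using Nat.decreasingInduction with
  | self => rwa [leftRow_self hj]
  | of_succ j hjl ih =>
    have ih := ih (by omega)
    exact ih.trans (hc.leftRow_succ_le hT hj hjl ih)

theorem antitoneOn_leftRow (hT : IsSSYT lam T) (hc : IsLeftRemnant lam l c)
    (h : 1 ≤ maxRow T c l x) : AntitoneOn (leftRow T c l x) (Set.Icc 1 l) :=
  antitoneOn_of_succ_le Set.ordConnected_Icc fun j _ hj hj' => by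
    rw [Order.succ_eq_add_one] at hj' ⊢
    exact hc.leftRow_succ_le hT hj.1 hj'.2 (hc.one_le_leftRow hT h (by omega) hj'.2)

theorem leftRemovePath (hT : IsSSYT lam T) (hc : IsLeftRemnant lam l c)
    (hl : 1 ≤ l) (hcl : 1 ≤ c l) :
    IsLeftRemnant lam l (leftRemovePath T c l) ∧ leftRemovePath T c l l = c l - 1 := by
  have hstart : maxRow T c l (T l (c l)) = c l :=
    maxRow_apply_self hT hl (hc.le_zeta l) hcl le_rfl
  have hrow : ∀ j, 1 ≤ j → j ≤ l →
      KeyPoly.leftRemovePath T c l j = leftRow T c l (T l (c l)) j - 1 :=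
    fun j h1 h2 => if_pos ⟨h1, h2⟩
  refine ⟨⟨fun j => ?_, fun j hj j' hj' hjj' => ?_⟩, ?_⟩
  · by_cases h : 1 ≤ j ∧ j ≤ l
    · rw [hrow j h.1 h.2]
      exact (Nat.sub_le _ _).trans ((leftRow_le h.1 h.2).trans (hc.le_zeta j))
    · rw [KeyPoly.leftRemovePath, if_neg h]
      exact hc.le_zeta j
  · rw [hrow j hj.1 hj.2, hrow j' hj'.1 hj'.2]
    exact Nat.sub_le_sub_right (hc.antitoneOn_leftRow hT (by rwa [hstart]) hj hj' hjj') 1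
  · rw [hrow l hl le_rfl, leftRow_self hl, hstart]

end IsLeftRemnant

theorem isLeftRemnant_leftRemnantIter (hT : IsSSYT lam T) (hl : 1 ≤ l) (hr : r ≤ zeta lam l) :
    IsLeftRemnant lam l (leftRemnantIter T (zeta lam) l r) ∧
      leftRemnantIter T (zeta lam) l r l = zeta lam l - r := by
  induction r with
  | zero => exact ⟨⟨fun _ => le_rfl, (zeta_antitone lam).antitoneOn _⟩, rfl⟩
  | succ r ih =>
    obtain ⟨hc, hcl⟩ := ih (by omega)
    obtain ⟨hc', hc'l⟩ := hc.leftRemovePath hT hl (by omega)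
    exact ⟨hc', hc'l.trans (by omega)⟩

theorem isLeftRemnant_leftRemnant (hT : IsSSYT lam T) (hl : 1 ≤ l) (hk : k ≤ zeta lam l) :
    IsLeftRemnant lam l (leftRemnant lam T l k) ∧ leftRemnant lam T l k l = k := by
  obtain ⟨hc, hcl⟩ := isLeftRemnant_leftRemnantIter hT hl (Nat.sub_le (zeta lam l) k)
  exact ⟨hc, hcl.trans (Nat.sub_sub_self hk)⟩

theorem leftEndVal_one (hT : IsSSYT lam T) (hc : c 1 ≤ zeta lam 1) (h1 : 1 ≤ r) (h2 : r ≤ c 1) :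
    leftEndVal T c 1 r = T 1 r := by
  simp [leftEndVal, leftRows, maxRow_apply_self hT le_rfl hc h1 h2]

theorem leftEndVal_succ (hT : IsSSYT lam T) (hc : c (j + 1) ≤ zeta lam (j + 1)) (hj : 1 ≤ j)
    (h1 : 1 ≤ r) (h2 : r ≤ c (j + 1)) (hρ : 1 ≤ maxRow T c j (T (j + 1) r)) :
    leftEndVal T c (j + 1) r = leftEndVal T c j (maxRow T c j (T (j + 1) r)) := by
  rw [leftEndVal, leftEndVal, leftRows_apply_maxRow hρ, leftRows,
    maxRow_apply_self hT (by omega) hc h1 h2, List.getLastD_cons]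
  obtain ⟨j, rfl⟩ := Nat.exists_eq_add_of_le' hj
  rw [leftRows, List.getLastD_cons, List.getLastD_cons]

theorem IsLeftRemnant.monotoneOn_leftEndVal (hT : IsSSYT lam T) (hc : IsLeftRemnant lam l c)
    (hj : 1 ≤ j) (hjl : j ≤ l) : MonotoneOn (leftEndVal T c j) (Set.Icc 1 (c j)) := by
  induction j, hj using Nat.le_induction with
  | base =>
    intro r hr r' hr' hrr'
    rw [leftEndVal_one hT (hc.le_zeta 1) hr.1 hr.2, leftEndVal_one hT (hc.le_zeta 1) hr'.1 hr'.2]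
    exact ((hT.strictMonoOn_col le_rfl).monotoneOn.mono (hc.Icc_subset 1)) hr hr' hrr'
  | succ j hj ih =>
    intro r hr r' hr' hrr'
    have hρ := hc.le_maxRow_succ hT hj hjl hr.1 hr.2
    have hρ' := hc.le_maxRow_succ hT hj hjl hr'.1 hr'.2
    rw [leftEndVal_succ hT (hc.le_zeta _) hj hr.1 hr.2 (hr.1.trans hρ),
      leftEndVal_succ hT (hc.le_zeta _) hj hr'.1 hr'.2 (hr'.1.trans hρ')]
    refine ih (by omega) ⟨hr.1.trans hρ, maxRow_le T c j _⟩ ⟨hr'.1.trans hρ', maxRow_le T c j _⟩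
      (maxRow_mono ?_)
    exact ((hT.strictMonoOn_col (by omega)).monotoneOn.mono (hc.Icc_subset _)) hr hr' hrr'

theorem keyTab_le_leftScanValue_iff (hT : IsSSYT lam T) (sg : ℕ → ℕ) (hbox : InShape lam l k) :
    keyTab lam sg l k ≤ leftScanValue lam T l k ↔ T l k ∈ Fset lam T sg l k := by
  obtain ⟨hU, hUl⟩ := isLeftRemnant_leftRemnant hT hbox.1 hbox.le_zeta
  have hk : 1 ≤ k := hbox.2.1
  have hs : T l k ≤ south lam T l k - 1 := Nat.le_sub_one_of_lt (hT.lt_south hbox)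
  obtain rfl | ⟨m, hm, rfl⟩ : l = 1 ∨ ∃ m, 1 ≤ m ∧ l = m + 1 := by
    rcases hbox.1.eq_or_lt with h | h
    · exact Or.inl h.symm
    · exact Or.inr ⟨l - 1, by omega, by omega⟩
  · rw [leftScanValue, leftEndVal_one hT (hU.le_zeta 1) hk hUl.ge, Fset, if_pos rfl, Set.mem_Icc]
    exact ⟨fun h => ⟨h, hs⟩, And.left⟩
  rw [Fset, if_neg (by omega)]
  simp only [Nat.add_sub_cancel]
  set U := leftRemnant lam T (m + 1) k
  set h₀ := maxRow T U m (T (m + 1) k)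
  set q := maxRow T U m (south lam T (m + 1) k - 1)
  set P := (Finset.Icc 1 q).filter fun h => keyTab lam sg (m + 1) k ≤ leftEndVal T U m h
  have hh₀ : k ≤ h₀ := hU.le_maxRow_succ hT hm le_rfl hk hUl.ge
  have hh₀U : h₀ ∈ Set.Icc 1 (U m) := ⟨hk.trans hh₀, maxRow_le T U m _⟩
  have hh₀q : h₀ ≤ q := maxRow_mono hs
  have hM : leftScanValue lam T (m + 1) k = leftEndVal T U m h₀ :=
    leftEndVal_succ hT (hU.le_zeta _) hm hk hUl.ge hh₀U.1
  rw [hM]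
  split_ifs with hP
  · obtain ⟨hp, hKp⟩ := Finset.mem_filter.1 (P.min'_mem hP)
    have hpU : P.min' hP ∈ Set.Icc 1 (U m) :=
      ⟨(Finset.mem_Icc.1 hp).1, (Finset.mem_Icc.1 hp).2.trans (maxRow_le T U m _)⟩
    rw [Set.mem_Icc, and_iff_left hs]
    constructor
    · intro hK
      have hh₀P : h₀ ∈ P := Finset.mem_filter.2 ⟨Finset.mem_Icc.2 ⟨hh₀U.1, hh₀q⟩, hK⟩
      calc T m (P.min' hP) ≤ T m h₀ :=
            (hT.strictMonoOn_col hm).monotoneOn.mono (hU.Icc_subset m) hpU hh₀U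
              (P.min'_le h₀ hh₀P)
        _ ≤ T (m + 1) k := apply_maxRow_le hh₀U.1
    · intro hpk
      exact hKp.trans
        (hU.monotoneOn_leftEndVal hT hm (by omega) hpU hh₀U (le_maxRow hpU.1 hpU.2 hpk))
  · simp only [Set.mem_empty_iff_false, iff_false]
    exact fun hK => hP ⟨h₀, Finset.mem_filter.2 ⟨Finset.mem_Icc.2 ⟨hh₀U.1, hh₀q⟩, hK⟩⟩

end


theorem leftScan_ge_key_iff_Fset_general (n : ℕ) (lam : NPartition n)
    (sg : ℕ → ℕ) (T : ℕ → ℕ → ℕ) (hT : IsSSYT lam T) :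
    (∀ l k, InShape lam l k → keyTab lam sg l k ≤ leftScanValue lam T l k) ↔
      (∀ l k, InShape lam l k → T l k ∈ Fset lam T sg l k) :=
  forall₂_congr fun _ _ => forall_congr' (keyTab_le_leftScanValue_iff hT sg)

/-- Theorem 9.1.  `M(T) ≥ Y_λ(σ)` iff every entry of `T`
lies in the corresponding set `F_λ(T, σ; l, k)`. -/
theorem leftScan_ge_key_iff_Fset (n : ℕ) (hn : 1 ≤ n) (lam : NPartition n)
    (sg : ℕ → ℕ) (hsg : IsNPerm n sg) (T : ℕ → ℕ → ℕ) (hT : IsSSYT lam T) :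
    (∀ l k, InShape lam l k → keyTab lam sg l k ≤ leftScanValue lam T l k) ↔
      (∀ l k, InShape lam l k → T l k ∈ Fset lam T sg l k) :=
  leftScan_ge_key_iff_Fset_general n lam sg T hT

end KeyPoly
end
end
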